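/- Let R and S be TRSs over disjoint ranked alphabets Σ and Δ respectively, such that no left-hand side of any rule of R ⊕ S is a variable. If the disjoint union R ⊕ S (a TRS over Σ ∪ Δ) preserves recognizability of finite tree languages (is a PRF-TRS), then both R and S preserve recognizability of finite tree languages (are PRF-TRSs). -/

import Mathlib

set_option autoImplicit false

/-!
Basic framework: ranked alphabets, terms, term rewrite systems,
bottom-up tree automata, recognizability.
A ranked alphabet is modelled by a (finite) type `σ` together with an
arity function `ar : σ → ℕ`.  `Tm.var n` denotes the variable `x_{n+1}`,
so `T_Σ(X_m)` corresponds to terms all of whose variables satisfy `n < m`,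
and ground terms (`T_Σ`) are terms satisfying `Tm.Ground`.
-/

/-- Terms over the ranked alphabet `(σ, ar)` with variables `x₁, x₂, …`
(`var n` is `x_{n+1}`). -/
inductive Tm (σ : Type) (ar : σ → ℕ) : Type
  | var : ℕ → Tm σ ar
  | app : (f : σ) → (Fin (ar f) → Tm σ ar) → Tm σ ar

namespace Tm

variable {σ γ : Type} {ar : σ → ℕ} {arγ : γ → ℕ}

/-- Application of a substitution `θ` (assigning a term to each variable). -/
def subst (θ : ℕ → Tm σ ar) : Tm σ ar → Tm σ ar
  | var n => θ n
  | app f ts => app f fun i => (ts i).subst θ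

/-- A term is ground if it contains no variables. -/
def Ground : Tm σ ar → Prop
  | var _ => False
  | app _ ts => ∀ i, (ts i).Ground

/-- The set of (indices of) variables occurring in a term. -/
def vars : Tm σ ar → Set ℕ
  | var n => {n}
  | app _ ts => ⋃ i, (ts i).vars

/-- Number of occurrences of the variable `x_{n+1}` in a term. -/
def count (n : ℕ) : Tm σ ar → ℕ
  | var m => if m = n then 1 else 0
  | app _ ts => ∑ i, (ts i).count n

/-- A term is linear if every variable occurs at most once in it. -/
def Linear (t : Tm σ ar) : Prop := ∀ n, t.count n ≤ 1

/-- The symbol `s` occurs in the term. -/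
def symOccurs (s : σ) : Tm σ ar → Prop
  | var _ => False
  | app f ts => f = s ∨ ∃ i, (ts i).symOccurs s

/-- Height of a term (constants and variables have height 0). -/
def height : Tm σ ar → ℕ
  | var _ => 0
  | app _ ts => Finset.univ.sup fun i => (ts i).height + 1

/-- Renaming of the alphabet along an arity-preserving map. -/
def map (ι : σ → γ) (h : ∀ s, arγ (ι s) = ar s) : Tm σ ar → Tm γ arγ
  | var n => var n
  | app f ts => app (ι f) fun i => (ts (Fin.cast (h f) i)).map ι h

/-- The subterm of `t` at a position (a list of argument indices), if defined. -/
def subAt : Tm σ ar → List ℕ → Option (Tm σ ar)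
  | t, [] => some t
  | var _, _ :: _ => none
  | app f ts, i :: p => if h : i < ar f then (ts ⟨i, h⟩).subAt p else none

/-- Subterm relation. -/
inductive Subtm : Tm σ ar → Tm σ ar → Prop
  | refl (t : Tm σ ar) : Subtm t t
  | app {s : Tm σ ar} {f : σ} {ts : Fin (ar f) → Tm σ ar} (i : Fin (ar f)) :
      Subtm s (ts i) → Subtm s (Tm.app f ts)

end Tm

section Rewriting

variable {σ γ : Type} {ar : σ → ℕ} {arγ : γ → ℕ}

/-- One-step rewriting by the rule set `R`: apply a rule under a substitution
at the root, or rewrite inside one argument. -/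
inductive Step (R : Set (Tm σ ar × Tm σ ar)) : Tm σ ar → Tm σ ar → Prop
  | rule {l r : Tm σ ar} (θ : ℕ → Tm σ ar) (h : (l, r) ∈ R) :
      Step R (l.subst θ) (r.subst θ)
  | congr {f : σ} {ts : Fin (ar f) → Tm σ ar} {t' : Tm σ ar} (i : Fin (ar f)) :
      Step R (ts i) t' → Step R (Tm.app f ts) (Tm.app f (Function.update ts i t'))

/-- Many-step rewriting: reflexive-transitive closure of `Step`. -/
def Steps (R : Set (Tm σ ar × Tm σ ar)) : Tm σ ar → Tm σ ar → Prop :=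
  Relation.ReflTransGen (Step R)

/-- `R` is a term rewrite system: finitely many rules, and every variable of a
right-hand side occurs in the corresponding left-hand side. -/
def IsTRS (R : Set (Tm σ ar × Tm σ ar)) : Prop :=
  R.Finite ∧ ∀ lr ∈ R, lr.2.vars ⊆ lr.1.vars

/-- The set `R*(L)` of descendants of members of `L`. -/
def Desc (R : Set (Tm σ ar × Tm σ ar)) (L : Set (Tm σ ar)) : Set (Tm σ ar) :=
  {p | ∃ q ∈ L, Steps R q p}

/-- `R` is terminating: there is no infinite reduction sequence. -/
def Terminating (R : Set (Tm σ ar × Tm σ ar)) : Prop :=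
  ¬ ∃ f : ℕ → Tm σ ar, ∀ n, Step R (f n) (f (n + 1))

/-- `R` is confluent. -/
def Confluent (R : Set (Tm σ ar × Tm σ ar)) : Prop :=
  ∀ a b c, Steps R a b → Steps R a c → ∃ d, Steps R b d ∧ Steps R c d

/-- `u` is an `R`-normal form of `t`. -/
def NormalFormOf (R : Set (Tm σ ar × Tm σ ar)) (t u : Tm σ ar) : Prop :=
  Steps R t u ∧ ¬ ∃ v, Step R u v

/-- The term is a variable. -/
def IsVarTm (t : Tm σ ar) : Prop := ∃ n, t = Tm.var n

/-- Every left-hand side is linear. -/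
def LeftLinearTRS (R : Set (Tm σ ar × Tm σ ar)) : Prop :=
  ∀ lr ∈ R, lr.1.Linear

/-- All left- and right-hand sides are linear. -/
def LinearTRS (R : Set (Tm σ ar × Tm σ ar)) : Prop :=
  ∀ lr ∈ R, lr.1.Linear ∧ lr.2.Linear

/-- No rule has a variable as left-hand side or as right-hand side. -/
def CollapseFree (R : Set (Tm σ ar × Tm σ ar)) : Prop :=
  ∀ lr ∈ R, ¬ IsVarTm lr.1 ∧ ¬ IsVarTm lr.2

/-- Transport of a rule set along an arity-preserving renaming of the alphabet. -/
def mapRules (ι : σ → γ) (h : ∀ s, arγ (ι s) = ar s) (R : Set (Tm σ ar × Tm σ ar)) :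
    Set (Tm γ arγ × Tm γ arγ) :=
  (fun lr => (lr.1.map ι h, lr.2.map ι h)) '' R

end Rewriting

/-- A bottom-up tree automaton over `(σ, ar)` with state type `Q`:
transition rules `δ(q₁,…,qₙ) → q`, λ-rules `q → q'`, and final states. -/
structure BTA (σ : Type) (ar : σ → ℕ) (Q : Type) where
  trans : ∀ f : σ, (Fin (ar f) → Q) → Q → Prop
  eps : Q → Q → Prop
  final : Q → Prop

namespace BTA

variable {σ : Type} {ar : σ → ℕ} {Q : Type}

/-- `t →* q`: the (ground) term `t` can be rewritten to the state `q`. -/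
inductive Reach (A : BTA σ ar Q) : Tm σ ar → Q → Prop
  | app {f : σ} {ts : Fin (ar f) → Tm σ ar} {qs : Fin (ar f) → Q} {q : Q} :
      (∀ i, Reach A (ts i) (qs i)) → A.trans f qs q → Reach A (Tm.app f ts) q
  | eps {t : Tm σ ar} {q q' : Q} : Reach A t q → A.eps q q' → Reach A t q'

/-- The tree language recognized by the automaton. -/
def Lang (A : BTA σ ar Q) : Set (Tm σ ar) := {t | ∃ q, A.final q ∧ A.Reach t q}

end BTA

/-- A tree language is recognizable if some bottom-up tree automaton with a
finite state set recognizes it. -/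
def Recognizable {σ : Type} {ar : σ → ℕ} (L : Set (Tm σ ar)) : Prop :=
  ∃ (Q : Type) (_ : Finite Q) (A : BTA σ ar Q), A.Lang = L

/-- `R` (a TRS over all of `σ`, thought of as `sign(R)`) preserves
recognizability of finite tree languages: for every ranked alphabet extending
`σ` (i.e. every finite type with an arity-preserving injection from `σ`) and
every finite tree language of ground terms, the descendant set is recognizable. -/
def PRF {σ : Type} {ar : σ → ℕ} (R : Set (Tm σ ar × Tm σ ar)) : Prop :=
  ∀ (γ : Type) (arγ : γ → ℕ), Finite γ →
    ∀ ι : σ → γ, Function.Injective ι →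
      ∀ h : ∀ s, arγ (ι s) = ar s,
        ∀ L : Set (Tm γ arγ), L.Finite → (∀ t ∈ L, t.Ground) →
          Recognizable (Desc (mapRules ι h R) L)

/-- `R` preserves recognizability: as `PRF`, but for arbitrary recognizable
tree languages. -/
def PR {σ : Type} {ar : σ → ℕ} (R : Set (Tm σ ar × Tm σ ar)) : Prop :=
  ∀ (γ : Type) (arγ : γ → ℕ), Finite γ →
    ∀ ι : σ → γ, Function.Injective ι →
      ∀ h : ∀ s, arγ (ι s) = ar s,
        ∀ L : Set (Tm γ arγ), Recognizable L →
          Recognizable (Desc (mapRules ι h R) L)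

/-!
Descendants of a term over `Σ` under `R ⊕ S` contain no `Δ`-symbol: a rule of `S` can only apply
at a `Δ`-symbol, since its left-hand side is not a variable, and a rule of `R` only copies subterms
matched by variables of its left-hand side. Hence, for a finite `L ⊆ T_Γ` with `Γ ⊇ Σ`, viewing `L`
over `Γ ⊕ Δ` gives `(R ⊕ S)*(L) = R*(L)`, and an automaton for the left side, restricted to the
symbols of `Γ`, recognizes `R*(L)`. The claim for `S` follows by symmetry.
-/

namespace Tm

variable {σ γ β : Type} {ar : σ → ℕ} {arγ : γ → ℕ} {arβ : β → ℕ}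

theorem map_map (ι₁ : σ → γ) (h₁ : ∀ s, arγ (ι₁ s) = ar s)
    (ι₂ : γ → β) (h₂ : ∀ s, arβ (ι₂ s) = arγ s) (t : Tm σ ar) :
    (t.map ι₁ h₁).map ι₂ h₂ = t.map (ι₂ ∘ ι₁) (fun s => (h₂ (ι₁ s)).trans (h₁ s)) := by
  induction t with
  | var n => rfl
  | app f ts ih => simp only [map, ih]; rfl

theorem vars_map (ι : σ → γ) (h : ∀ s, arγ (ι s) = ar s) (t : Tm σ ar) :
    (t.map ι h).vars = t.vars := by
  induction t with
  | var n => rfl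
  | app f ts ih =>
    simp only [map, vars, ih]
    exact (Fin.castOrderIso (h f)).toEquiv.iSup_comp (g := fun i => (ts i).vars)

theorem map_subst (ι : σ → γ) (h : ∀ s, arγ (ι s) = ar s) (θ : ℕ → Tm σ ar) (t : Tm σ ar) :
    (t.subst θ).map ι h = (t.map ι h).subst fun n => (θ n).map ι h := by
  induction t with
  | var n => rfl
  | app f ts ih => simp only [subst, map, ih]

theorem Ground.map (ι : σ → γ) (h : ∀ s, arγ (ι s) = ar s) {t : Tm σ ar} (ht : t.Ground) :
    (t.map ι h).Ground := by
  induction t with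
  | var n => exact ht.elim
  | app f ts ih => exact fun i => ih _ (ht _)

theorem subst_congr {θ₁ θ₂ : ℕ → Tm σ ar} (t : Tm σ ar) (h : ∀ n ∈ t.vars, θ₁ n = θ₂ n) :
    t.subst θ₁ = t.subst θ₂ := by
  induction t with
  | var n => exact h n rfl
  | app f ts ih =>
    simp only [subst]
    congr 1
    funext i
    exact ih i fun n hn => h n (Set.mem_iUnion.mpr ⟨i, hn⟩)

theorem map_app_update (ι : σ → γ) (h : ∀ s, arγ (ι s) = ar s) (f : σ)
    (ts : Fin (ar f) → Tm σ ar) (i : Fin (ar f)) (t : Tm σ ar) :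
    (app f (Function.update ts i t)).map ι h =
      app (ι f) (Function.update (fun j => (ts (Fin.cast (h f) j)).map ι h)
        (Fin.cast (h f).symm i) (t.map ι h)) := by
  simp only [map]
  congr 1
  funext j
  by_cases hj : j = Fin.cast (h f).symm i
  · subst hj
    simp
  · have hj' : Fin.cast (h f) j ≠ i := fun he => hj (by simp [← he])
    simp [Function.update_of_ne hj, Function.update_of_ne hj']

end Tm

section Renaming

variable {σ γ β : Type} {ar : σ → ℕ} {arγ : γ → ℕ} {arβ : β → ℕ}

theorem mapRules_mapRules (ι₁ : σ → γ) (h₁ : ∀ s, arγ (ι₁ s) = ar s)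
    (ι₂ : γ → β) (h₂ : ∀ s, arβ (ι₂ s) = arγ s) (R : Set (Tm σ ar × Tm σ ar)) :
    mapRules ι₂ h₂ (mapRules ι₁ h₁ R) =
      mapRules (ι₂ ∘ ι₁) (fun s => (h₂ (ι₁ s)).trans (h₁ s)) R := by
  simp only [mapRules, Set.image_image, Tm.map_map]

theorem mapRules_union (ι : σ → γ) (h : ∀ s, arγ (ι s) = ar s)
    (R S : Set (Tm σ ar × Tm σ ar)) :
    mapRules ι h (R ∪ S) = mapRules ι h R ∪ mapRules ι h S :=
  Set.image_union _ _ _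

theorem mapRules_vars_subset {R : Set (Tm σ ar × Tm σ ar)} (ι : σ → γ)
    (h : ∀ s, arγ (ι s) = ar s) (hR : ∀ lr ∈ R, lr.2.vars ⊆ lr.1.vars) :
    ∀ lr ∈ mapRules ι h R, lr.2.vars ⊆ lr.1.vars := by
  rintro _ ⟨⟨l, r⟩, hlr, rfl⟩
  simpa only [Tm.vars_map] using hR _ hlr

theorem Step.mono {R S : Set (Tm σ ar × Tm σ ar)} (hRS : R ⊆ S) {t u : Tm σ ar}
    (h : Step R t u) : Step S t u := by
  induction h with
  | rule θ hlr => exact Step.rule θ (hRS hlr)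
  | congr i _ ih => exact Step.congr i ih

theorem Step.map (ι : σ → γ) (h : ∀ s, arγ (ι s) = ar s) {R : Set (Tm σ ar × Tm σ ar)}
    {t u : Tm σ ar} (htu : Step R t u) : Step (mapRules ι h R) (t.map ι h) (u.map ι h) := by
  induction htu with
  | @rule l r θ hlr =>
    rw [Tm.map_subst, Tm.map_subst]
    exact Step.rule _ ⟨(l, r), hlr, rfl⟩
  | @congr f ts t' i _ ih =>
    rw [Tm.map_app_update]
    exact Step.congr (Fin.cast (h f).symm i) ih

theorem Steps.mono {R S : Set (Tm σ ar × Tm σ ar)} (hRS : R ⊆ S) {t u : Tm σ ar}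
    (h : Steps R t u) : Steps S t u :=
  Relation.ReflTransGen.mono (fun _ _ => Step.mono hRS) _ _ h

theorem Steps.map (ι : σ → γ) (h : ∀ s, arγ (ι s) = ar s) {R : Set (Tm σ ar × Tm σ ar)}
    {t u : Tm σ ar} (htu : Steps R t u) : Steps (mapRules ι h R) (t.map ι h) (u.map ι h) :=
  Relation.ReflTransGen.lift (Tm.map ι h) (fun _ _ => Step.map ι h) _ _ htu

theorem PRF.rename {R : Set (Tm σ ar × Tm σ ar)} (hR : PRF R) (j : σ → γ)
    (hj : Function.Injective j) (h : ∀ s, arγ (j s) = ar s) : PRF (mapRules j h R) := by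
  intro β arβ hβ ι hι hιar L hLfin hLg
  rw [mapRules_mapRules]
  exact hR β arβ hβ (ι ∘ j) (hι.comp hj) _ L hLfin hLg

end Renaming

namespace BTA

variable {σ γ Q : Type} {ar : σ → ℕ} {arγ : γ → ℕ}

def comap (ι : σ → γ) (h : ∀ s, arγ (ι s) = ar s) (A : BTA γ arγ Q) : BTA σ ar Q where
  trans f qs q := A.trans (ι f) (fun i => qs (Fin.cast (h f) i)) q
  eps := A.eps
  final := A.final

theorem reach_of_reach_comap (ι : σ → γ) (h : ∀ s, arγ (ι s) = ar s) {A : BTA γ arγ Q}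
    {t : Tm σ ar} {q : Q} (hr : (A.comap ι h).Reach t q) : A.Reach (t.map ι h) q := by
  induction hr with
  | app _ htr ih => exact Reach.app (fun i => ih _) htr
  | eps _ he ih => exact Reach.eps ih he

theorem reach_comap_of_reach (ι : σ → γ) (h : ∀ s, arγ (ι s) = ar s) {A : BTA γ arγ Q}
    {u : Tm γ arγ} {q : Q} (hr : A.Reach u q) :
    ∀ t : Tm σ ar, t.map ι h = u → (A.comap ι h).Reach t q := by
  induction hr with
  | @app f us qs q _ htr ih =>
    rintro (n | ⟨g, ts⟩) ht
    · cases ht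
    · simp only [Tm.map] at ht
      injection ht with hf hts
      subst hf
      cases hts
      refine Reach.app (qs := fun i => qs (Fin.cast (h g).symm i))
        (fun i => ih (Fin.cast (h g).symm i) _ ?_) (by simpa [comap] using htr)
      simp
  | eps _ he ih => exact fun t ht => Reach.eps (ih t ht) he

theorem lang_comap (ι : σ → γ) (h : ∀ s, arγ (ι s) = ar s) (A : BTA γ arγ Q) :
    (A.comap ι h).Lang = Tm.map ι h ⁻¹' A.Lang := by
  ext t
  exact exists_congr fun q => and_congr_right fun _ =>
    ⟨reach_of_reach_comap ι h, fun hr => reach_comap_of_reach ι h hr t rfl⟩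

end BTA

theorem Recognizable.preimage_map {σ γ : Type} {ar : σ → ℕ} {arγ : γ → ℕ} (ι : σ → γ)
    (h : ∀ s, arγ (ι s) = ar s) {L : Set (Tm γ arγ)} (hL : Recognizable L) :
    Recognizable (Tm.map ι h ⁻¹' L) := by
  obtain ⟨Q, hQ, A, rfl⟩ := hL
  exact ⟨Q, hQ, A.comap ι h, A.lang_comap ι h⟩

namespace Tm

variable {α β : Type} {ara : α → ℕ} {arb : β → ℕ}

def inl (t : Tm α ara) : Tm (α ⊕ β) (Sum.elim ara arb) :=
  t.map Sum.inl fun _ => rfl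

theorem inl_app (f : α) (ts : Fin (ara f) → Tm α ara) :
    inl (arb := arb) (app f ts) = app (Sum.inl f) fun i => inl (ts i) :=
  rfl

theorem inl_subst (θ : ℕ → Tm α ara) (t : Tm α ara) :
    inl (arb := arb) (t.subst θ) = (inl t).subst (inl ∘ θ) :=
  map_subst _ _ θ t

theorem vars_inl (t : Tm α ara) : (inl (arb := arb) t).vars = t.vars :=
  vars_map _ _ t

/-- A left inverse of `Tm.inl`; its value on terms containing a `Δ`-symbol is junk. -/
def unInl : Tm (α ⊕ β) (Sum.elim ara arb) → Tm α ara
  | var n => var n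
  | app (Sum.inl f) ts => app f fun i => unInl (ts i)
  | app (Sum.inr _) _ => var 0

theorem unInl_inl (t : Tm α ara) : unInl (inl (arb := arb) t) = t := by
  induction t with
  | var n => rfl
  | app f ts ih => simp only [inl_app, unInl]; exact congrArg _ (funext ih)

theorem inl_injective : Function.Injective (inl : Tm α ara → Tm (α ⊕ β) (Sum.elim ara arb)) :=
  Function.LeftInverse.injective unInl_inl

theorem inl_unInl_of_inl_subst_eq_inl {θ : ℕ → Tm (α ⊕ β) (Sum.elim ara arb)}
    {l t : Tm α ara} (h : (inl l).subst θ = inl t) : ∀ n ∈ l.vars, inl (unInl (θ n)) = θ n := by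
  induction l generalizing t with
  | var n =>
    rintro m rfl
    rw [show θ m = inl t from h, unInl_inl]
  | app f ls ih =>
    cases t with
    | var m => cases h
    | app g ts =>
      simp only [inl_app, subst] at h
      injection h with hfg hls
      cases Sum.inl_injective hfg
      intro n hn
      obtain ⟨i, hi⟩ := Set.mem_iUnion.mp hn
      exact ih i (congrFun (eq_of_heq hls) i) n hi

theorem inl_subst_of_inl_unInl {θ : ℕ → Tm (α ⊕ β) (Sum.elim ara arb)} {t : Tm α ara}
    (h : ∀ n ∈ t.vars, inl (unInl (θ n)) = θ n) :
    (inl t).subst θ = inl (t.subst (unInl ∘ θ)) := by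
  rw [inl_subst]
  exact subst_congr _ fun n hn => (h n (vars_inl t ▸ hn)).symm

end Tm

section DisjointUnion

variable {α β : Type} {ara : α → ℕ} {arb : β → ℕ}

abbrev disjointUnion (R : Set (Tm α ara × Tm α ara)) (S : Set (Tm β arb × Tm β arb)) :
    Set (Tm (α ⊕ β) (Sum.elim ara arb) × Tm (α ⊕ β) (Sum.elim ara arb)) :=
  mapRules (ar := ara) Sum.inl (fun _ => rfl) R ∪ mapRules (ar := arb) Sum.inr (fun _ => rfl) S

variable {R : Set (Tm α ara × Tm α ara)} {S : Set (Tm β arb × Tm β arb)}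

theorem Step.of_disjointUnion_inl (hR : ∀ lr ∈ R, lr.2.vars ⊆ lr.1.vars)
    (hS : ∀ lr ∈ S, ¬ IsVarTm lr.1) {u v : Tm (α ⊕ β) (Sum.elim ara arb)}
    (huv : Step (disjointUnion R S) u v) :
    ∀ t : Tm α ara, Tm.inl t = u → ∃ t', Tm.inl t' = v ∧ Step R t t' := by
  induction huv with
  | @rule l r θ hlr =>
    rintro t ht
    rcases hlr with ⟨⟨l, r⟩, hlr, ⟨⟩⟩ | ⟨⟨l, r⟩, hlr, ⟨⟩⟩
    · change Tm.inl t = (Tm.inl l).subst θ at ht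
      change ∃ t', Tm.inl t' = (Tm.inl r).subst θ ∧ _
      have hθl := Tm.inl_unInl_of_inl_subst_eq_inl ht.symm
      rw [Tm.inl_subst_of_inl_unInl hθl] at ht
      refine ⟨r.subst (Tm.unInl ∘ θ), (Tm.inl_subst_of_inl_unInl fun n hn =>
        hθl n (hR _ hlr hn)).symm, ?_⟩
      rw [Tm.inl_injective ht]
      exact Step.rule _ hlr
    · obtain ⟨f, ls, rfl⟩ : ∃ f ls, l = Tm.app f ls := by
        cases l with
        | var n => exact absurd ⟨n, rfl⟩ (hS _ hlr)
        | app f ls => exact ⟨f, ls, rfl⟩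
      cases t <;> cases ht
  | @congr f us u' i _ ih =>
    rintro (n | ⟨g, ts⟩) ht
    · cases ht
    · injection ht with hfg hts
      subst hfg
      cases hts
      obtain ⟨t', rfl, htt'⟩ := ih (ts i) rfl
      exact ⟨.app g (Function.update ts i t'), Tm.map_app_update _ _ g ts i t',
        Step.congr (f := g) i htt'⟩

theorem Steps.of_disjointUnion_inl (hR : ∀ lr ∈ R, lr.2.vars ⊆ lr.1.vars)
    (hS : ∀ lr ∈ S, ¬ IsVarTm lr.1) {t : Tm α ara} {v : Tm (α ⊕ β) (Sum.elim ara arb)}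
    (htv : Steps (disjointUnion R S) (Tm.inl t) v) : ∃ t', Tm.inl t' = v ∧ Steps R t t' := by
  induction htv with
  | refl => exact ⟨t, rfl, .refl⟩
  | tail _ hstep ih =>
    obtain ⟨t', rfl, htt'⟩ := ih
    obtain ⟨t'', rfl, ht't''⟩ := Step.of_disjointUnion_inl hR hS hstep t' rfl
    exact ⟨t'', rfl, htt'.tail ht't''⟩

theorem desc_disjointUnion_image_inl (hR : ∀ lr ∈ R, lr.2.vars ⊆ lr.1.vars)
    (hS : ∀ lr ∈ S, ¬ IsVarTm lr.1) (L : Set (Tm α ara)) :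
    Desc (disjointUnion R S) (Tm.inl '' L) = Tm.inl '' Desc R L := by
  ext v
  constructor
  · rintro ⟨_, ⟨t, ht, rfl⟩, htv⟩
    obtain ⟨t', rfl, htt'⟩ := Steps.of_disjointUnion_inl hR hS htv
    exact ⟨t', ⟨t, ht, htt'⟩, rfl⟩
  · rintro ⟨t', ⟨t, ht, htt'⟩, rfl⟩
    exact ⟨Tm.inl t, ⟨t, ht, rfl⟩, (htt'.map Sum.inl _).mono Set.subset_union_left⟩

theorem mapRules_sumMap_disjointUnion {γ : Type} {arγ : γ → ℕ} (ι : α → γ)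
    (h : ∀ s, arγ (ι s) = ara s)
    (h' : ∀ x, Sum.elim arγ arb (Sum.map ι id x) = Sum.elim ara arb x) :
    mapRules (Sum.map ι id) h' (disjointUnion R S) = disjointUnion (mapRules ι h R) S := by
  unfold disjointUnion
  rw [mapRules_union]
  congr 1
  · exact (mapRules_mapRules _ _ _ _ _).trans
      (mapRules_mapRules ι h Sum.inl (fun _ => rfl) R).symm
  · exact mapRules_mapRules _ _ _ _ _

theorem mapRules_swap_disjointUnion
    (h : ∀ x, Sum.elim arb ara (Sum.swap x) = Sum.elim ara arb x) :
    mapRules Sum.swap h (disjointUnion R S) = disjointUnion S R := by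
  unfold disjointUnion
  rw [mapRules_union, Set.union_comm]
  congr 1 <;> exact mapRules_mapRules _ _ _ _ _

theorem PRF.of_disjointUnion_left [Finite β] (hR : ∀ lr ∈ R, lr.2.vars ⊆ lr.1.vars)
    (hS : ∀ lr ∈ S, ¬ IsVarTm lr.1) (hRS : PRF (disjointUnion R S)) : PRF R := by
  intro γ arγ hγ ι hι h L hLfin hLg
  have h' : ∀ x, Sum.elim arγ arb (Sum.map ι id x) = Sum.elim ara arb x := by
    rintro (s | s)
    exacts [h s, rfl]
  have hrec := hRS (γ ⊕ β) _ inferInstance _ (hι.sumMap Function.injective_id) h'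
    (Tm.inl '' L) (hLfin.image _) (by rintro _ ⟨t, ht, rfl⟩; exact (hLg t ht).map _ _)
  rw [mapRules_sumMap_disjointUnion ι h,
    desc_disjointUnion_image_inl (mapRules_vars_subset ι h hR) hS] at hrec
  rw [← Set.preimage_image_eq (Desc _ L) Tm.inl_injective]
  exact hrec.preimage_map Sum.inl _

theorem PRF.disjointUnion_comm (hRS : PRF (disjointUnion R S)) : PRF (disjointUnion S R) := by
  have h : ∀ x, Sum.elim arb ara (Sum.swap x) = Sum.elim ara arb x := by
    rintro (s | s) <;> rfl
  simpa only [mapRules_swap_disjointUnion] using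
    hRS.rename Sum.swap (Function.LeftInverse.injective Sum.swap_swap) h

end DisjointUnion

theorem stmt_18 {σ δ : Type} {ar : σ → ℕ} {arδ : δ → ℕ} [Finite σ] [Finite δ]
    (R : Set (Tm σ ar × Tm σ ar)) (S : Set (Tm δ arδ × Tm δ arδ))
    (hR : IsTRS R) (hS : IsTRS S)
    -- no left-hand side of a rule of `R ⊕ S` is a variable
    (hvarR : ∀ lr ∈ R, ¬ IsVarTm lr.1) (hvarS : ∀ lr ∈ S, ¬ IsVarTm lr.1)
    -- `R ⊕ S`, the TRS `R ∪ S` over `Σ ∪ Δ = σ ⊕ δ`, is a PRF-TRS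
    (hPRF : PRF (mapRules (Sum.inl : σ → σ ⊕ δ) (fun _ => rfl) R ∪
      mapRules (Sum.inr : δ → σ ⊕ δ) (fun _ => rfl) S :
        Set (Tm (σ ⊕ δ) (Sum.elim ar arδ) × Tm (σ ⊕ δ) (Sum.elim ar arδ)))) :
    PRF R ∧ PRF S :=
  ⟨PRF.of_disjointUnion_left hR.2 hvarS hPRF,
    PRF.of_disjointUnion_left hS.2 hvarR (PRF.disjointUnion_comm hPRF)⟩
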